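/- arXiv:1909.12680 — 4 statements merged into one kernel-verified Lean document; each statement's English description precedes it below -/
import Mathlib

section
/- Let λ = λ±(θ) with λ² − 2|a|λ cos θ + 1 = 0 (so λ is a nonzero complex number), and suppose pₙ(λ) = 0 with λ ≠ 0, where pₙ(λ) = (λ²/F₁(λ))[Fₙ(λ) − |a|²F_{n−1}(λ)] and Fₙ(λ±(θ)) = ±2i(|a|λ±(θ))ⁿ sin nθ. Then θ satisfies sin²(nθ) = −(|a|²/|b|²)·sin²θ, where |b|² = 1 − |a|². -/
open Complex

lemma mul_sin_eq_of_two_I_mul_pow_succ_eq {A lam φ ψ : ℂ} (m : ℕ) (hA : A ≠ 0) (hlam : lam ≠ 0)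
    (h : 2 * I * (A * lam) ^ (m + 1) * sin ψ = A ^ 2 * (2 * I * (A * lam) ^ m * sin φ)) :
    lam * sin ψ = A * sin φ := by
  have hc : 2 * I * (A * lam) ^ m * A ≠ 0 := by simp [hA, hlam]
  apply mul_left_cancel₀ hc
  linear_combination h

/-- Squaring `(λ - A cos θ) sin ψ = -A cos ψ sin θ` eliminates `λ` and `cos ψ`,
since `(λ - A cos θ)² = A² cos² θ - 1`. -/
lemma sq_sin_eq_of_mul_sin_eq_mul_sin_sub {A lam ψ θ : ℂ}
    (hlam : lam ^ 2 - 2 * A * lam * cos θ + 1 = 0) (h : lam * sin ψ = A * sin (ψ - θ)) :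
    (A ^ 2 - 1) * sin ψ ^ 2 = A ^ 2 * sin θ ^ 2 := by
  rw [sin_sub] at h
  linear_combination ((lam - A * cos θ) * sin ψ - A * cos ψ * sin θ) * h - sin ψ ^ 2 * hlam
    - A ^ 2 * sin ψ ^ 2 * sin_sq_add_cos_sq θ + A ^ 2 * sin θ ^ 2 * sin_sq_add_cos_sq ψ

theorem stmt_6_general (a b : ℂ) (ha0 : 0 < ‖a‖) (ha1 : ‖a‖ < 1)
    (hab : ‖a‖ ^ 2 + ‖b‖ ^ 2 = 1)
    (θ lam : ℂ) (n : ℕ) (hn : 1 ≤ n)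
    (hlam : lam ^ 2 - 2 * (‖a‖ : ℂ) * lam * Complex.cos θ + 1 = 0)
    (heig : 2 * I * ((‖a‖ : ℂ) * lam) ^ n * Complex.sin (n * θ) =
      (‖a‖ : ℂ) ^ 2 *
        (2 * I * ((‖a‖ : ℂ) * lam) ^ (n - 1) * Complex.sin ((n - 1 : ℕ) * θ))) :
    Complex.sin (n * θ) ^ 2 =
      -(((‖a‖ : ℂ) ^ 2 / (‖b‖ : ℂ) ^ 2)) * Complex.sin θ ^ 2 := by
  obtain ⟨m, rfl⟩ := Nat.exists_eq_add_of_le' hn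
  have hlam0 : lam ≠ 0 := by rintro rfl; norm_num at hlam
  have ha : (‖a‖ : ℂ) ≠ 0 := by exact_mod_cast ha0.ne'
  have hb : (‖b‖ : ℂ) ≠ 0 := by exact_mod_cast (show ‖b‖ ≠ 0 by intro h; nlinarith)
  rw [Nat.add_sub_cancel] at heig
  have hred := mul_sin_eq_of_two_I_mul_pow_succ_eq m ha hlam0 heig
  rw [show (m : ℂ) * θ = ((m + 1 : ℕ) : ℂ) * θ - θ by push_cast; ring] at hred
  have key := sq_sin_eq_of_mul_sin_eq_mul_sin_sub hlam hred
  have hab' : (‖a‖ : ℂ) ^ 2 + (‖b‖ : ℂ) ^ 2 = 1 := by exact_mod_cast hab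
  field_simp
  linear_combination -key + sin (((m + 1 : ℕ) : ℂ) * θ) ^ 2 * hab'

/-- reduction of the eigenvalue equation `Fₙ(λ) = |a|²F_{n−1}(λ)`
(with `Fₙ(λ±(θ)) = ±2i(|a|λ±(θ))ⁿ sin nθ`, here the `+` branch) to the
transcendental equation `sin²(nθ) = −(|a|²/|b|²) sin²θ`, where `|b|² = 1 − |a|²`
and `λ` satisfies `λ² − 2|a|λcos θ + 1 = 0`, `λ ≠ 0`. -/
theorem stmt_6 (a b : ℂ) (ha0 : 0 < ‖a‖) (ha1 : ‖a‖ < 1)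
    (hab : ‖a‖ ^ 2 + ‖b‖ ^ 2 = 1)
    (θ lam : ℂ) (n : ℕ) (hn : 1 ≤ n)
    (hlam : lam ^ 2 - 2 * (‖a‖ : ℂ) * lam * Complex.cos θ + 1 = 0)
    (hlam0 : lam ≠ 0)
    (heig : 2 * I * ((‖a‖ : ℂ) * lam) ^ n * Complex.sin (n * θ) =
      (‖a‖ : ℂ) ^ 2 *
        (2 * I * ((‖a‖ : ℂ) * lam) ^ (n - 1) * Complex.sin ((n - 1 : ℕ) * θ))) :
    Complex.sin (n * θ) ^ 2 =
      -(((‖a‖ : ℂ) ^ 2 / (‖b‖ : ℂ) ^ 2)) * Complex.sin θ ^ 2 :=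
  stmt_6_general a b ha0 ha1 hab θ lam n hn hlam heig
end

section
/- Let 0 < |a| < 1 and define f(λ) = (ω₋(λ) − |a|²)/(ω₊(λ) − |a|²) where ω±(λ) = (1/2)[λ²+1 ± √((λ²+1)² − 4|a|²λ²)]. Then |f(i)| = (1+|a|)/(1−|a|), and |f(λ)| ≤ (1+|a|)/(1−|a|) for all λ in the closed unit disk. -/
/-!
Vieta's formulas give `(ω₋ - |a|²)(ω₊ - |a|²) = -|a|²(1 - |a|²)` independently of `λ`, so
`|f| = |ω₋ - |a|²|² / (|a|²(1 - |a|²))`. Since `|ω₋|² ≤ |ω₋ ω₊| = |a|²|λ|² ≤ |a|²`, the numerator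
is at most `(|a| + |a|²)²`, which gives the bound; at `λ = i` it is attained.
-/

theorem sub_mul_sub_eq_of_add_eq_of_mul_eq {R : Type*} [CommRing R] {l p m c : R}
    (hsum : p + m = l ^ 2 + 1) (hprod : p * m = c * l ^ 2) :
    (m - c) * (p - c) = -(c * (1 - c)) := by
  linear_combination hprod - c * hsum

theorem norm_le_of_norm_le_of_norm_mul_le {K : Type*} [NormedDivisionRing K] {p m : K} {r : ℝ}
    (hr : 0 ≤ r) (hmp : ‖m‖ ≤ ‖p‖) (hpm : ‖p * m‖ ≤ r ^ 2) : ‖m‖ ≤ r := by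
  have hsq : ‖m‖ ^ 2 ≤ r ^ 2 := by
    calc ‖m‖ ^ 2 = ‖m‖ * ‖m‖ := sq _
      _ ≤ ‖p‖ * ‖m‖ := mul_le_mul_of_nonneg_right hmp (norm_nonneg _)
      _ = ‖p * m‖ := (norm_mul _ _).symm
      _ ≤ r ^ 2 := hpm
  exact (pow_le_pow_iff_left₀ (norm_nonneg _) hr two_ne_zero).mp hsq

theorem norm_div_le_of_norm_mul_eq {K : Type*} [NormedField K] {x y : K} {M P : ℝ}
    (hxy : ‖x * y‖ = P) (hx : ‖x‖ ≤ M) : ‖x / y‖ ≤ M ^ 2 / P := by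
  have hP : 0 ≤ P := hxy ▸ norm_nonneg _
  have hdiv : ‖x / y‖ = ‖x‖ ^ 2 / P := by
    rcases eq_or_ne ‖x‖ 0 with hx0 | hx0
    · simp [hx0]
    · rw [← hxy, norm_div, norm_mul, sq, mul_div_mul_left _ _ hx0]
  rw [hdiv]
  gcongr

theorem norm_neg_sub_sq_div_sub_sq {r : ℝ} (hr0 : 0 < r) (hr1 : r < 1) :
    ‖(-(r : ℂ) - (r : ℂ) ^ 2) / ((r : ℂ) - (r : ℂ) ^ 2)‖ = (1 + r) / (1 - r) := by
  have hval : (-(r : ℂ) - (r : ℂ) ^ 2) / ((r : ℂ) - (r : ℂ) ^ 2) =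
      ((-((1 + r) / (1 - r)) : ℝ) : ℂ) := by
    have : (r : ℂ) ≠ 0 := by exact_mod_cast hr0.ne'
    have : (1 : ℂ) - r ≠ 0 := by exact_mod_cast (sub_pos.mpr hr1).ne'
    push_cast
    field_simp
    ring
  rw [hval, Complex.norm_real, norm_neg,
    Real.norm_of_nonneg (div_nonneg (by linarith) (by linarith))]

theorem norm_sub_sq_div_sub_sq_le_of_vieta {r : ℝ} (hr0 : 0 < r) (hr1 : r < 1) {l p m : ℂ}
    (hl : ‖l‖ ≤ 1) (hsum : p + m = l ^ 2 + 1) (hprod : p * m = (r : ℂ) ^ 2 * l ^ 2)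
    (hmp : ‖m‖ ≤ ‖p‖) :
    ‖(m - (r : ℂ) ^ 2) / (p - (r : ℂ) ^ 2)‖ ≤ (1 + r) / (1 - r) := by
  have hr2 : 0 < 1 - r ^ 2 := by nlinarith
  have hm : ‖m‖ ≤ r := by
    refine norm_le_of_norm_le_of_norm_mul_le hr0.le hmp ?_
    rw [hprod, norm_mul, norm_pow, norm_pow, Complex.norm_real, Real.norm_of_nonneg hr0.le]
    exact mul_le_of_le_one_right (by positivity) (pow_le_one₀ (norm_nonneg _) hl)
  have hnum : ‖m - (r : ℂ) ^ 2‖ ≤ r * (1 + r) := by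
    calc ‖m - (r : ℂ) ^ 2‖ ≤ ‖m‖ + ‖(r : ℂ) ^ 2‖ := norm_sub_le _ _
      _ ≤ r * (1 + r) := by
        rw [norm_pow, Complex.norm_real, Real.norm_of_nonneg hr0.le]
        linarith
  have hprodnorm : ‖(m - (r : ℂ) ^ 2) * (p - (r : ℂ) ^ 2)‖ = r ^ 2 * (1 - r ^ 2) := by
    rw [sub_mul_sub_eq_of_add_eq_of_mul_eq hsum hprod, norm_neg, ← Complex.ofReal_pow,
      ← Complex.ofReal_one, ← Complex.ofReal_sub, ← Complex.ofReal_mul, Complex.norm_real,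
      Real.norm_of_nonneg (by positivity)]
  calc _ ≤ (r * (1 + r)) ^ 2 / (r ^ 2 * (1 - r ^ 2)) := norm_div_le_of_norm_mul_eq hprodnorm hnum
    _ = (1 + r) / (1 - r) := by
        rw [div_eq_div_iff (by positivity) (by linarith)]
        ring

/-- with `ω±(λ)` the roots of `ω² − (λ²+1)ω + |a|²λ² = 0`
(the branch chosen so that `|ω₋| ≤ |ω₊|`) and
`f(λ) = (ω₋(λ) − |a|²)/(ω₊(λ) − |a|²)`, one has `|f(i)| = (1+|a|)/(1−|a|)`
(at `λ = i` the roots are `ω₊ = |a|, ω₋ = −|a|`), and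
`|f(λ)| ≤ (1+|a|)/(1−|a|)` for every `λ` in the closed unit disk. -/
theorem stmt_11 (a : ℂ) (ha0 : 0 < ‖a‖) (ha1 : ‖a‖ < 1) :
    (‖(-(‖a‖ : ℂ) - (‖a‖ : ℂ) ^ 2) /
        ((‖a‖ : ℂ) - (‖a‖ : ℂ) ^ 2)‖ =
      (1 + ‖a‖) / (1 - ‖a‖)) ∧
    (∀ lam ωp ωm : ℂ, ‖lam‖ ≤ 1 →
      ωp + ωm = lam ^ 2 + 1 →
      ωp * ωm = (‖a‖ : ℂ) ^ 2 * lam ^ 2 →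
      ‖ωm‖ ≤ ‖ωp‖ →
      ‖(ωm - (‖a‖ : ℂ) ^ 2) / (ωp - (‖a‖ : ℂ) ^ 2)‖ ≤
        (1 + ‖a‖) / (1 - ‖a‖)) :=
  ⟨norm_neg_sub_sq_div_sub_sq ha0 ha1, fun _ _ _ => norm_sub_sq_div_sub_sq_le_of_vieta ha0 ha1⟩
end

section
/- Let 0 < |a| < 1, y = |a|/|b|, τ = 4/(πy), and for fixed k let λₙ be a sequence of complex numbers with λₙ·e^{−iφ} = 1 − i(πk)²y/(2n²) + O(n⁻³) as n → ∞ (where e^{iφ} = |a|+i|b| and τn² rounds to an integer). Then (λₙ e^{−iφ})^{⌊τn²⌋} → 1 as n → ∞. -/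
/-!
Writing `zₙ = λₙ e^{−iφ}` and `mₙ = ⌊τn²⌋`, the expansion gives `n²(zₙ − 1) → −ic` with
`c = (πk)²y/2`, and `mₙ/n² → τ`, so `mₙ(zₙ − 1) → −icτ`. As `zₙ → 1`, this forces
`zₙ^{mₙ} → exp(−icτ)`, and `cτ = 2πk²` makes this limit `1`.
-/

open Filter Real Complex Asymptotics Topology

namespace Complex

theorem tendsto_one_add_pow_exp_of_tendsto_natCast_mul {α : Type*} {l : Filter α}
    {m : α → ℕ} {g : α → ℂ} {t : ℂ} (hg : Tendsto g l (𝓝 0))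
    (hmg : Tendsto (fun x ↦ (m x : ℂ) * g x) l (𝓝 t)) :
    Tendsto (fun x ↦ (1 + g x) ^ m x) l (𝓝 (exp t)) := by
  have hlog_err : Tendsto (fun x ↦ (m x : ℂ) * (log (1 + g x) - g x)) l (𝓝 0) := by
    have hO : (fun x ↦ (m x : ℂ) * (log (1 + g x) - g x)) =O[l]
        fun x ↦ ((m x : ℂ) * g x) * g x := by
      simpa only [sq, mul_assoc, Function.comp_def] using
        (isBigO_refl (fun x ↦ (m x : ℂ)) l).mul (log_sub_self_isBigO.comp_tendsto hg)
    exact hO.trans_tendsto (by simpa using hmg.mul hg)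
  have hlog : Tendsto (fun x ↦ (m x : ℂ) * log (1 + g x)) l (𝓝 t) := by
    simpa [mul_sub] using hmg.add hlog_err
  refine ((continuous_exp.tendsto t).comp hlog).congr' ?_
  filter_upwards [hg.eventually_ne (show (0 : ℂ) ≠ -1 by simp)] with x hx
  rw [Function.comp_apply, exp_nat_mul, exp_log]
  exact fun h ↦ hx (eq_neg_of_add_eq_zero_right h)

end Complex

theorem tendsto_pow_floor_mul_sq_of_tendsto {z : ℕ → ℂ} {s : ℂ} {τ : ℝ} (hτ : 0 ≤ τ)
    (hz : Tendsto (fun n : ℕ ↦ (n : ℂ) ^ 2 * (z n - 1)) atTop (𝓝 s)) :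
    Tendsto (fun n : ℕ ↦ z n ^ ⌊τ * (n : ℝ) ^ 2⌋₊) atTop (𝓝 (exp (τ * s))) := by
  have hsq : Tendsto (fun n : ℕ ↦ (n : ℝ) ^ 2) atTop atTop :=
    (tendsto_pow_atTop two_ne_zero).comp tendsto_natCast_atTop_atTop
  have hfloor : Tendsto (fun n : ℕ ↦ ((⌊τ * (n : ℝ) ^ 2⌋₊ / (n : ℝ) ^ 2 : ℝ) : ℂ)) atTop (𝓝 τ) :=
    (continuous_ofReal.tendsto τ).comp ((tendsto_nat_floor_mul_div_atTop hτ).comp hsq)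
  have hinv : Tendsto (fun n : ℕ ↦ (((n : ℝ) ^ 2)⁻¹ : ℂ)) atTop (𝓝 0) := by
    simpa [Function.comp_def] using
      (continuous_ofReal.tendsto 0).comp (tendsto_inv_atTop_zero.comp hsq)
  have hne : ∀ᶠ n : ℕ in atTop, (n : ℂ) ≠ 0 := by
    filter_upwards [eventually_ne_atTop 0] with n hn
    exact_mod_cast hn
  refine (tendsto_one_add_pow_exp_of_tendsto_natCast_mul (g := fun n ↦ z n - 1) ?_ ?_).congr
    fun n ↦ by rw [add_sub_cancel]
  · have hlim := hinv.mul hz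
    rw [zero_mul] at hlim
    refine hlim.congr' ?_
    filter_upwards [hne] with n hn
    push_cast
    field_simp
  · refine (hfloor.mul hz).congr' ?_
    filter_upwards [hne] with n hn
    push_cast
    field_simp

theorem tendsto_sq_mul_sub_one_of_norm_sub_le {z : ℕ → ℂ} {c C : ℝ}
    (hz : ∀ᶠ n : ℕ in atTop, ‖z n - (1 - I * ((c / (n : ℝ) ^ 2 : ℝ) : ℂ))‖ ≤ C / (n : ℝ) ^ 3) :
    Tendsto (fun n : ℕ ↦ (n : ℂ) ^ 2 * (z n - 1)) atTop (𝓝 (-(I * c))) := by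
  have hrem : Tendsto (fun n : ℕ ↦ (n : ℂ) ^ 2 * (z n - (1 - I * ((c / (n : ℝ) ^ 2 : ℝ) : ℂ))))
      atTop (𝓝 0) := by
    refine squeeze_zero_norm' ?_ (tendsto_const_div_atTop_nhds_zero_nat C)
    filter_upwards [hz, eventually_gt_atTop 0] with n hn hpos
    have hn0 : (0 : ℝ) < n := Nat.cast_pos.mpr hpos
    calc ‖(n : ℂ) ^ 2 * (z n - (1 - I * ((c / (n : ℝ) ^ 2 : ℝ) : ℂ)))‖
        ≤ (n : ℝ) ^ 2 * (C / (n : ℝ) ^ 3) := by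
          rw [norm_mul, norm_pow, Complex.norm_natCast]
          gcongr
      _ = C / n := by field_simp
  have hlim := hrem.sub_const (I * c)
  rw [zero_sub] at hlim
  refine hlim.congr' ?_
  filter_upwards [eventually_ne_atTop 0] with n hn
  have : (n : ℂ) ≠ 0 := Nat.cast_ne_zero.mpr hn
  push_cast
  field_simp
  ring

theorem stmt_15_general (a b : ℂ) (ha0 : 0 < ‖a‖) (hb : 0 < ‖b‖)
    (y : ℝ) (hy : y = ‖a‖ / ‖b‖)
    (τ : ℝ) (hτ : τ = 4 / (π * y))
    (φ : ℝ) (k : ℕ) (lam : ℕ → ℂ)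
    (hlam : ∃ C : ℝ, ∀ᶠ n : ℕ in atTop,
      ‖lam n * Complex.exp (-(Complex.I * φ)) -
        (1 - Complex.I * (((π * k) ^ 2 * y / (2 * (n : ℝ) ^ 2) : ℝ) : ℂ))‖
        ≤ C / (n : ℝ) ^ 3) :
    Tendsto (fun n : ℕ => (lam n * Complex.exp (-(Complex.I * φ))) ^ ⌊τ * (n : ℝ) ^ 2⌋₊)
      atTop (nhds 1) := by
  obtain ⟨C, hC⟩ := hlam
  have hy0 : 0 < y := hy ▸ div_pos ha0 hb
  have hτ0 : 0 ≤ τ := by rw [hτ]; positivity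
  have hlim := tendsto_pow_floor_mul_sq_of_tendsto hτ0
    (tendsto_sq_mul_sub_one_of_norm_sub_le (c := (π * k) ^ 2 * y / 2)
      (by simpa only [div_div] using hC))
  have hphase : (τ : ℂ) * -(I * ((π * k) ^ 2 * y / 2 : ℝ)) =
      ((-(k ^ 2 : ℤ) : ℤ) : ℂ) * (2 * π * I) := by
    have : (y : ℂ) ≠ 0 := ofReal_ne_zero.mpr hy0.ne'
    rw [hτ]
    push_cast
    field_simp
    ring
  rwa [hphase, exp_int_mul_two_pi_mul_I] at hlim

/-- if `λₙ·e^{−iφ} = 1 − i(πk)²y/(2n²) + O(n⁻³)` with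
`e^{iφ} = |a| + i|b|`, `y = |a|/|b|` and `τ = 4/(πy)`, then
`(λₙ e^{−iφ})^{⌊τn²⌋} → 1` as `n → ∞`. -/
theorem stmt_15 (a b : ℂ) (ha0 : 0 < ‖a‖) (ha1 : ‖a‖ < 1)
    (hab : ‖a‖ ^ 2 + ‖b‖ ^ 2 = 1) (hb : 0 < ‖b‖)
    (y : ℝ) (hy : y = ‖a‖ / ‖b‖)
    (τ : ℝ) (hτ : τ = 4 / (π * y))
    (φ : ℝ) (hφ : Complex.exp (Complex.I * φ) = (‖a‖ : ℂ) + Complex.I * (‖b‖ : ℂ))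
    (k : ℕ) (hk : 0 < k)
    (lam : ℕ → ℂ)
    (hlam : ∃ C : ℝ, ∀ᶠ n : ℕ in atTop,
      ‖lam n * Complex.exp (-(Complex.I * φ)) -
        (1 - Complex.I * (((π * k) ^ 2 * y / (2 * (n : ℝ) ^ 2) : ℝ) : ℂ))‖
        ≤ C / (n : ℝ) ^ 3) :
    Tendsto (fun n : ℕ => (lam n * Complex.exp (-(Complex.I * φ))) ^ ⌊τ * (n : ℝ) ^ 2⌋₊)
      atTop (nhds 1) :=
  stmt_15_general a b ha0 hb y hy τ hτ φ k lam hlam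
end

section
/- Consider the 2×2 transfer matrix M(λ) = (1/λ)·[[a, b], [a·conj(b)/conj(a), (λ²+|b|²)/conj(a)]] with a, b ∈ ℂ, a ≠ 0, |a|²+|b|²=1, λ ≠ 0. Then tr M(λ) = (λ²+1)/(conj(a)·λ) and det M(λ) = a/conj(a); consequently any sequence of vectors vⱼ₊₁ = M(λ)vⱼ with first coordinate of v₁ equal to 0 satisfies vⱼ = (1/((conj(a)λ)^{j-1}F₁))·[conj(a)·b·F_{j−1}, F_j − |a|²·F_{j−1}]ᵀ · (second coordinate of v₁), where Fⱼ = ω₊ʲ − ω₋ʲ and ω± are the eigenvalues of conj(a)·λ·M(λ). -/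
open Matrix Complex

/-- the transfer matrix
`M(λ) = (1/λ)·[[a, b], [a·conj(b)/conj(a), (λ²+|b|²)/conj(a)]]` has trace
`(λ²+1)/(conj(a)λ)` and determinant `a/conj(a)`; consequently, any sequence
`vⱼ₊₁ = M(λ)vⱼ` with `(v 1) 0 = 0` satisfies
`v j = (1/((conj(a)λ)^{j−1}F₁))·[conj(a)·b·F_{j−1}, F_j − |a|²F_{j−1}]ᵀ·(v 1) 1`,
where `Fⱼ = ω₊ʲ − ω₋ʲ` and `ω±` are the eigenvalues of `conj(a)λ·M(λ)`, i.e. the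
roots of `ω² − (λ²+1)ω + |a|²λ² = 0`. -/
theorem stmt_18 (a b : ℂ) (ha : a ≠ 0)
    (hab : ‖a‖ ^ 2 + ‖b‖ ^ 2 = 1)
    (lam : ℂ) (hlam : lam ≠ 0)
    (M : Matrix (Fin 2) (Fin 2) ℂ)
    (hM : M = lam⁻¹ • !![a, b;
      a * (starRingEnd ℂ) b / (starRingEnd ℂ) a,
      (lam ^ 2 + (‖b‖ : ℂ) ^ 2) / (starRingEnd ℂ) a])
    (ωp ωm : ℂ)
    (hsum : ωp + ωm = lam ^ 2 + 1)
    (hprod : ωp * ωm = (‖a‖ : ℂ) ^ 2 * lam ^ 2)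
    (F : ℕ → ℂ) (hF : ∀ j : ℕ, F j = ωp ^ j - ωm ^ j) (hF1 : F 1 ≠ 0)
    (v : ℕ → Fin 2 → ℂ)
    (hrec : ∀ j : ℕ, v (j + 1) = M.mulVec (v j))
    (hbc : v 1 0 = 0) :
    M.trace = (lam ^ 2 + 1) / ((starRingEnd ℂ) a * lam) ∧
    M.det = a / (starRingEnd ℂ) a ∧
    ∀ j : ℕ, 1 ≤ j →
      v j = fun i => (1 / (((starRingEnd ℂ) a * lam) ^ (j - 1) * F 1)) *
        (if i = 0 then (starRingEnd ℂ) a * b * F (j - 1)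
          else F j - (‖a‖ : ℂ) ^ 2 * F (j - 1)) * v 1 1 := by
  have hc : (starRingEnd ℂ) a ≠ 0 := by simpa using ha
  have hA : ((‖a‖ : ℂ)) ^ 2 = a * (starRingEnd ℂ) a := by
    rw [Complex.mul_conj]
    norm_cast
    exact Complex.sq_norm a
  have hB : ((‖b‖ : ℂ)) ^ 2 = b * (starRingEnd ℂ) b := by
    rw [Complex.mul_conj]
    norm_cast
    exact Complex.sq_norm b
  have hcast : (‖a‖ : ℂ) ^ 2 + (‖b‖ : ℂ) ^ 2 = 1 := by
    exact_mod_cast congrArg (Complex.ofReal) hab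
  have hb2 : ((‖b‖ : ℂ)) ^ 2 = 1 - a * (starRingEnd ℂ) a := by
    rw [← hA]; linear_combination hcast
  have hrecF : ∀ k : ℕ, F (k + 2) = (lam ^ 2 + 1) * F (k + 1)
      - (‖a‖ : ℂ) ^ 2 * lam ^ 2 * F k := by
    intro k
    simp only [hF]
    linear_combination (ωp ^ (k + 1) - ωm ^ (k + 1)) * hsum - (ωp ^ k - ωm ^ k) * hprod
  refine ⟨?_, ?_, ?_⟩
  · rw [hM]
    rw [Matrix.trace_smul, Matrix.trace_fin_two_of]
    field_simp
    rw [smul_eq_mul, hb2]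
    field_simp
    ring
  · rw [hM]
    rw [Matrix.det_smul, Matrix.det_fin_two_of]
    field_simp
    rw [Fintype.card_fin, hB]
    field_simp
    ring
  · intro j hj
    induction j, hj using Nat.le_induction with
    | base =>
      funext i
      fin_cases i
      · simpa [hF] using hbc
      · have hω : ωp - ωm ≠ 0 := by
          have := hF1; rw [hF] at this; simpa using this
        simp [hF]
        field_simp
    | succ n hn ih =>
      obtain ⟨k, rfl⟩ := Nat.exists_eq_add_of_le' hn
      rw [hrec, ih, hM]
      funext i
      fin_cases i
      · simp [Matrix.mulVec, dotProduct, Fin.sum_univ_two]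
        field_simp
        linear_combination (-(b * v 1 1 * F k * (lam * (starRingEnd ℂ) a) ^ (k + 1))) * hA
      · simp [Matrix.mulVec, dotProduct, Fin.sum_univ_two]
        field_simp
        have hb2' : ((‖b‖ : ℂ)) ^ 2 = 1 - ((‖a‖ : ℂ)) ^ 2 := by
          linear_combination hcast
        set C := (starRingEnd ℂ) a * (starRingEnd ℂ) a ^ k * v 1 1 * lam * lam ^ k * F 1 with hC
        linear_combination (v 1 1 * (lam * (starRingEnd ℂ) a) ^ (k + 1)) * (-hrecF k - ((‖b‖ : ℂ)) ^ 2 * F k * hA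
          - a * (starRingEnd ℂ) a * F k * hB + F (k+1) * hcast)
end
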